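/- Let g(y) = (y/2)(1 − √((2y−1)(3−2y))) for y ∈ [1/2, 3/2]. Then g(1/2) = 1/4, g(1) = 0, g(3/2) = 3/4, g is strictly decreasing on [1/2, 1], and g is strictly increasing on [1, 3/2]. -/

import Mathlib

/-!
Writing `s y = √((2y-1)(3-2y)) = √(1 - 4(y-1)²)` and rationalising `1 - s y`,
`g y = 2 y (y-1)² / (1 + s y)` on `[1/2, 3/2]`. The numerator `y (y-1)²` is strictly
decreasing on `[1/2, 1]` and strictly increasing on `[1, 3/2]`, while the positive
denominator does the opposite, so `g` inherits the monotonicity of the numerator.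
-/

open Set Real

noncomputable def gEx7 (y : ℝ) : ℝ :=
  y / 2 * (1 - Real.sqrt ((2 * y - 1) * (3 - 2 * y)))

section

variable {α 𝕜 : Type*} [Preorder α] [Field 𝕜] [LinearOrder 𝕜] [IsStrictOrderedRing 𝕜]
  {s : Set α} {f g : α → 𝕜}

theorem StrictAntiOn.div_of_monotoneOn (hf : StrictAntiOn f s) (hf₀ : ∀ x ∈ s, 0 ≤ f x)
    (hg : MonotoneOn g s) (hg₀ : ∀ x ∈ s, 0 < g x) :
    StrictAntiOn (fun x => f x / g x) s := fun a ha b hb hab =>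
  calc f b / g b ≤ f b / g a := div_le_div_of_nonneg_left (hf₀ b hb) (hg₀ a ha) (hg ha hb hab.le)
    _ < f a / g a := div_lt_div_of_pos_right (hf ha hb hab) (hg₀ a ha)

theorem StrictMonoOn.div_of_antitoneOn (hf : StrictMonoOn f s) (hf₀ : ∀ x ∈ s, 0 ≤ f x)
    (hg : AntitoneOn g s) (hg₀ : ∀ x ∈ s, 0 < g x) :
    StrictMonoOn (fun x => f x / g x) s := fun a ha b hb hab =>
  calc f a / g a ≤ f a / g b := div_le_div_of_nonneg_left (hf₀ a ha) (hg₀ b hb) (hg ha hb hab.le)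
    _ < f b / g b := div_lt_div_of_pos_right (hf ha hb hab) (hg₀ b hb)

end

lemma strictAntiOn_mul_sub_one_sq : StrictAntiOn (fun y : ℝ => y * (y - 1) ^ 2) (Icc (1/3) 1) := by
  rintro a ⟨ha, -⟩ b ⟨-, hb⟩ hab
  -- `b (b-1)² - a (a-1)² = (b - a) q` with `q` the bracket below
  have hq : (b - 1) * (3 * a - 1) + (b - a) * (b - a - 1) < 0 := by
    linarith [mul_nonpos_of_nonpos_of_nonneg (by linarith : b - 1 ≤ 0) (by linarith : 0 ≤ 3 * a - 1),
      mul_neg_of_pos_of_neg (by linarith : 0 < b - a) (by linarith : b - a - 1 < 0)]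
  linear_combination mul_neg_of_pos_of_neg (sub_pos.2 hab) hq

lemma strictMonoOn_mul_sub_one_sq : StrictMonoOn (fun y : ℝ => y * (y - 1) ^ 2) (Ici 1) := by
  rintro a (ha : 1 ≤ a) b - hab
  have := pow_lt_pow_left₀ (by linarith : a - 1 < b - 1) (by linarith) two_ne_zero
  nlinarith [sq_nonneg (a - 1)]

lemma monotoneOn_sqrt_radicand :
    MonotoneOn (fun y : ℝ => √((2 * y - 1) * (3 - 2 * y))) (Iic 1) :=
  fun a _ b (hb : b ≤ 1) hab => Real.sqrt_le_sqrt (by nlinarith)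

lemma antitoneOn_sqrt_radicand :
    AntitoneOn (fun y : ℝ => √((2 * y - 1) * (3 - 2 * y))) (Ici 1) :=
  fun a (ha : 1 ≤ a) b _ hab => Real.sqrt_le_sqrt (by nlinarith)

lemma eqOn_gEx7_div : EqOn gEx7
    (fun y => 2 * (y * (y - 1) ^ 2) / (1 + √((2 * y - 1) * (3 - 2 * y)))) (Icc (1/2) (3/2)) := by
  rintro y ⟨hy₁, hy₂⟩
  have hs := sq_sqrt (by nlinarith : 0 ≤ (2 * y - 1) * (3 - 2 * y))
  rw [gEx7, eq_div_iff (by positivity)]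
  linear_combination (-y / 2) * hs

theorem stmt_17 :
    gEx7 (1/2) = 1/4 ∧ gEx7 1 = 0 ∧ gEx7 (3/2) = 3/4 ∧
    StrictAntiOn gEx7 (Icc (1/2) 1) ∧
    StrictMonoOn gEx7 (Icc 1 (3/2)) := by
  refine ⟨by norm_num [gEx7], by norm_num [gEx7], by norm_num [gEx7], ?_, ?_⟩
  · refine StrictAntiOn.congr ?_ (eqOn_gEx7_div.mono (Icc_subset_Icc le_rfl (by norm_num))).symm
    refine StrictAntiOn.div_of_monotoneOn ?_ ?_ ?_ ?_
    · exact (strictMono_mul_left_of_pos two_pos).comp_strictAntiOn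
        (strictAntiOn_mul_sub_one_sq.mono (Icc_subset_Icc (by norm_num) le_rfl))
    · exact fun y hy => mul_nonneg two_pos.le (mul_nonneg (by linarith [hy.1]) (sq_nonneg _))
    · exact (monotoneOn_sqrt_radicand.mono Icc_subset_Iic_self).const_add 1
    · intro y hy; positivity
  · refine StrictMonoOn.congr ?_ (eqOn_gEx7_div.mono (Icc_subset_Icc (by norm_num) le_rfl)).symm
    refine StrictMonoOn.div_of_antitoneOn ?_ ?_ ?_ ?_
    · exact (strictMono_mul_left_of_pos two_pos).comp_strictMonoOn
        (strictMonoOn_mul_sub_one_sq.mono Icc_subset_Ici_self)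
    · exact fun y hy => mul_nonneg two_pos.le (mul_nonneg (by linarith [hy.1]) (sq_nonneg _))
    · exact (antitoneOn_sqrt_radicand.mono Icc_subset_Ici_self).const_add 1
    · intro y hy; positivity
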